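/- For every positive integer n there exists a set S ⊆ {1, 2, …, 4n²} with |S| = n that is a Sidon set; that is, whenever a, b, c, d ∈ S satisfy a + b = c + d, then {a, b} = {c, d}. -/

import Mathlib

/-!
For an odd prime `p`, the numbers `2 p i + (i² mod p)`, `0 ≤ i < p`, form a Sidon set. Since the
remainders are below `p`, a coincidence of two sums can be read off in base `2 p`: it forces
`i + j = k + l` and `i² + j² ≡ k² + l² (mod p)`, so `i j ≡ k l` and `{i, j}` and `{k, l}` are the
root sets of the same quadratic over `𝔽_p`. Bertrand's postulate provides `p ∈ (n, 2 n]`, and the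
first `n` of these numbers, shifted by one, lie in `[1, 4 n²]`.
-/

def IsSidon {α : Type*} [Add α] [DecidableEq α] (S : Finset α) : Prop :=
  ∀ a ∈ S, ∀ b ∈ S, ∀ c ∈ S, ∀ d ∈ S, a + b = c + d → ({a, b} : Finset α) = {c, d}

section IsSidon

variable {α β : Type*} [Add α] [DecidableEq α]

theorem isSidon_of_card_le_one {S : Finset α} (hS : S.card ≤ 1) : IsSidon S := by
  intro a ha b hb c hc d hd _
  obtain ⟨rfl, rfl, rfl⟩ : b = a ∧ c = a ∧ d = a :=
    ⟨Finset.card_le_one.mp hS b hb a ha, Finset.card_le_one.mp hS c hc a ha,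
      Finset.card_le_one.mp hS d hd a ha⟩
  rfl

theorem isSidon_image {f : β → α} {s : Finset β}
    (hf : ∀ i ∈ s, ∀ j ∈ s, ∀ k ∈ s, ∀ l ∈ s,
      f i + f j = f k + f l → i = k ∧ j = l ∨ i = l ∧ j = k) :
    IsSidon (s.image f) := by
  simp only [IsSidon, Finset.mem_image]
  rintro _ ⟨i, hi, rfl⟩ _ ⟨j, hj, rfl⟩ _ ⟨k, hk, rfl⟩ _ ⟨l, hl, rfl⟩ hsum
  rcases hf i hi j hj k hk l hl hsum with ⟨rfl, rfl⟩ | ⟨rfl, rfl⟩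
  · rfl
  · exact Finset.pair_comm _ _

end IsSidon

theorem eq_or_eq_of_add_eq_add_of_sq_add_sq_eq {R : Type*} [CommRing R] [NoZeroDivisors R]
    (h2 : (2 : R) ≠ 0) {a b c d : R} (hs : a + b = c + d) (hq : a ^ 2 + b ^ 2 = c ^ 2 + d ^ 2) :
    a = c ∨ a = d := by
  have hprod : a * b = c * d :=
    mul_left_cancel₀ h2 (by linear_combination (a + b + c + d) * hs - hq)
  have hroot : (a - c) * (a - d) = 0 := by linear_combination a * hs - hprod
  rcases mul_eq_zero.mp hroot with h | h
  · exact .inl (sub_eq_zero.mp h)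
  · exact .inr (sub_eq_zero.mp h)

theorem Nat.eq_and_eq_of_mul_add_eq_mul_add {m a b x y : ℕ} (hx : x < m) (hy : y < m)
    (h : m * a + x = m * b + y) : a = b ∧ x = y := by
  have hm : 0 < m := by omega
  obtain ⟨hdiv, hmod⟩ := (Nat.div_mod_unique hm).mpr ⟨(add_comm x (m * a)).trans h, hx⟩
  obtain ⟨hdiv', hmod'⟩ := (Nat.div_mod_unique hm).mpr ⟨add_comm y (m * b), hy⟩
  exact ⟨hdiv.symm.trans hdiv', hmod.symm.trans hmod'⟩

def erdosTuran (p i : ℕ) : ℕ := 2 * p * i + i ^ 2 % p + 1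

theorem erdosTuran_add_erdosTuran_eq {p i j k l : ℕ} (hp : p.Prime) (hp2 : 2 < p)
    (hi : i < p) (hk : k < p) (hl : l < p)
    (h : erdosTuran p i + erdosTuran p j = erdosTuran p k + erdosTuran p l) :
    i = k ∧ j = l ∨ i = l ∧ j = k := by
  have := Fact.mk hp
  have hrem : ∀ m, m ^ 2 % p < p := fun m => Nat.mod_lt _ hp.pos
  obtain ⟨hsum, hsq⟩ : i + j = k + l ∧ i ^ 2 % p + j ^ 2 % p = k ^ 2 % p + l ^ 2 % p := by
    refine Nat.eq_and_eq_of_mul_add_eq_mul_add (m := 2 * p) ?_ ?_ ?_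
    · linarith [hrem i, hrem j]
    · linarith [hrem k, hrem l]
    · simp only [erdosTuran] at h; linarith
  have hsumZ : (i + j : ZMod p) = k + l := by exact_mod_cast congrArg (Nat.cast (R := ZMod p)) hsum
  have hsqZ : (i ^ 2 + j ^ 2 : ZMod p) = k ^ 2 + l ^ 2 := by
    simpa only [Nat.cast_add, ZMod.natCast_mod, Nat.cast_pow]
      using congrArg (Nat.cast (R := ZMod p)) hsq
  have h2 : (2 : ZMod p) ≠ 0 := by
    intro h0
    have : p ∣ 2 := (ZMod.natCast_eq_zero_iff 2 p).mp (by exact_mod_cast h0)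
    have := Nat.le_of_dvd two_pos this
    omega
  have hval : ∀ {m}, m < p → (m : ZMod p).val = m := ZMod.val_natCast_of_lt
  rcases eq_or_eq_of_add_eq_add_of_sq_add_sq_eq h2 hsumZ hsqZ with hik | hil
  · have := congrArg ZMod.val hik
    rw [hval hi, hval hk] at this
    omega
  · have := congrArg ZMod.val hil
    rw [hval hi, hval hl] at this
    omega

theorem isSidon_image_erdosTuran {p n : ℕ} (hp : p.Prime) (hp2 : 2 < p) (hn : n ≤ p) :
    IsSidon ((Finset.range n).image (erdosTuran p)) := by
  refine isSidon_image fun i hi j hj k hk l hl => ?_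
  simp only [Finset.mem_range] at hi hj hk hl
  exact erdosTuran_add_erdosTuran_eq hp hp2 (by omega) (by omega) (by omega)

theorem erdosTuran_mem_Icc {p n i : ℕ} (hp : p.Prime) (hpn : p ≤ 2 * n) (hi : i < n) :
    erdosTuran p i ∈ Finset.Icc 1 (4 * n ^ 2) := by
  have hrem : i ^ 2 % p < p := Nat.mod_lt _ hp.pos
  have hmul : 2 * p * (i + 1) ≤ 2 * (2 * n) * n := Nat.mul_le_mul (by omega) hi
  simp only [Finset.mem_Icc, erdosTuran]
  exact ⟨le_add_self, by nlinarith⟩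

theorem erdosTuran_strictMono {p : ℕ} (hp : p.Prime) : StrictMono (erdosTuran p) := by
  intro a b hab
  have hrem : a ^ 2 % p < p := Nat.mod_lt _ hp.pos
  have hmul : 2 * p * (a + 1) ≤ 2 * p * b := Nat.mul_le_mul_left _ hab
  simp only [erdosTuran]
  linarith [Nat.mul_succ (2 * p) a, Nat.zero_le (b ^ 2 % p)]

theorem sidon_set_exists (n : ℕ) :
    ∃ S : Finset ℕ, S ⊆ Finset.Icc 1 (4 * n ^ 2) ∧ S.card = n ∧
      ∀ a ∈ S, ∀ b ∈ S, ∀ c ∈ S, ∀ d ∈ S,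
        a + b = c + d → ({a, b} : Finset ℕ) = {c, d} := by
  rcases Nat.lt_or_ge n 2 with hsmall | hlarge
  · refine ⟨Finset.Icc 1 n, Finset.Icc_subset_Icc_right (by nlinarith), by simp,
      isSidon_of_card_le_one (by rw [Nat.card_Icc]; omega)⟩
  obtain ⟨p, hp, hnp, hpn⟩ := Nat.exists_prime_lt_and_le_two_mul n (by omega)
  refine ⟨(Finset.range n).image (erdosTuran p), ?_, ?_,
    isSidon_image_erdosTuran hp (by omega) hnp.le⟩
  · exact Finset.image_subset_iff.mpr fun i hi => erdosTuran_mem_Icc hp hpn (Finset.mem_range.mp hi)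
  · rw [Finset.card_image_of_injective _ (erdosTuran_strictMono hp).injective, Finset.card_range]
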